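/- Subentropy is Schur concave in the density matrix: if ρ and σ are n×n density matrices whose eigenvalue vectors, listed in non-increasing order, satisfy λ(ρ) ≺ λ(σ) (i.e. Σ_{i=1}^k λ_i(ρ) ≤ Σ_{i=1}^k λ_i(σ) for all 1 ≤ k ≤ n), then Q(ρ) ≥ Q(σ). -/

import Mathlib

open MeasureTheory Matrix
open scoped ComplexOrder

/-- η(y) = −y ln y (with ln 0 = 0 in Mathlib, so 0 ln 0 = 0). -/
noncomputable def eta (y : ℝ) : ℝ := -(y * Real.log y)

/-- C_n = 1/2 + 1/3 + ⋯ + 1/n (C_1 = 0). -/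
noncomputable def harmC (n : ℕ) : ℝ := ∑ k ∈ Finset.Icc 2 n, (1 : ℝ) / k

/-- Integral of a function over the probability simplex Δ_n with respect to the
normalized uniform measure dx = (n−1)! dx_1 ⋯ dx_{n−1}, realised in the coordinates
(x_1, …, x_{n−1}), with x_n = 1 − (x_1 + ⋯ + x_{n−1}). -/
noncomputable def simplexIntegral (n : ℕ) (f : (Fin n → ℝ) → ℝ) : ℝ :=
  ((n - 1).factorial : ℝ) *
    ∫ y in {y : Fin (n - 1) → ℝ | (∀ i, 0 ≤ y i) ∧ ∑ i, y i ≤ 1},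
      f (fun i => if h : (i : ℕ) < n - 1 then y ⟨(i : ℕ), h⟩ else 1 - ∑ j, y j)

/-- Subentropy of a probability vector: F(λ) = n ∫_{Δ_n} η(λ·x) dx − C_n. -/
noncomputable def subF (n : ℕ) (lam : Fin n → ℝ) : ℝ :=
  (n : ℝ) * simplexIntegral n (fun x => eta (∑ i, lam i * x i)) - harmC n

/-- Subentropy of a (Hermitian) matrix: Q(ρ) = F(λ(ρ)), the subentropy of its
eigenvalue vector (junk value 0 for non-Hermitian matrices). -/
noncomputable def Qmat {ι : Type} [Fintype ι] [DecidableEq ι] (ρ : Matrix ι ι ℂ) : ℝ :=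
  if h : ρ.IsHermitian then
    subF (Fintype.card ι) (fun k => h.eigenvalues ((Fintype.equivFin ι).symm k))
  else 0

/-!
The subentropy `subF n` is concave on the nonnegative orthant, being an average of `η` composed
with linear functionals, and it is invariant under permuting its argument: in the chart
`y ↦ (y, 1 - ∑ y)` of the simplex, a transposition of barycentric coordinates is an affine
involution, hence preserves Lebesgue measure. A concave function with this symmetry decreases
along majorization: while `b ≠ a`, moving mass `δ` from a coordinate `j` with `a j < b j` to a
later one `k` with `b k < a k` keeps the partial sums of `b` above those of `a`, makes one more
coordinate agree with `a`, and replaces `b` by a point of the segment from `b` to `b ∘ swap j k`.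
-/

open Finset

section Integral

lemma concaveOn_integral {E α : Type*} [AddCommGroup E] [Module ℝ E] [MeasurableSpace α]
    {μ : Measure α} {s : Set E} {g : E → α → ℝ} (hs : Convex ℝ s) (hint : ∀ x ∈ s, Integrable (g x) μ)
    (hg : ∀ᵐ y ∂μ, ConcaveOn ℝ s (g · y)) :
    ConcaveOn ℝ s fun x => ∫ y, g x y ∂μ := by
  refine ⟨hs, fun x hx x' hx' p q hp hq hpq => ?_⟩
  simp only [smul_eq_mul]
  rw [← integral_const_mul, ← integral_const_mul,
    ← integral_add ((hint x hx).const_mul p) ((hint x' hx').const_mul q)]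
  refine integral_mono_ae (((hint x hx).const_mul p).add ((hint x' hx').const_mul q))
    (hint _ (hs hx hx' hp hq hpq)) ?_
  filter_upwards [hg] with y hy
  simpa only [smul_eq_mul] using hy.2 hx hx' hp hq hpq

variable {E : Type*} [NormedAddCommGroup E] [NormedSpace ℝ E] [MeasurableSpace E] [BorelSpace E]
  [FiniteDimensional ℝ E]

lemma measurePreserving_of_involutive_of_affine (μ : Measure E) [μ.IsAddHaarMeasure]
    {T : E → E} (L : E →ₗ[ℝ] E) (hT : ∀ y, T y = T 0 + L y) (hinv : Function.Involutive T) :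
    MeasurePreserving T μ μ := by
  have hT0 : T 0 + L (T 0) = 0 := by rw [← hT, hinv]
  have hL : L ∘ₗ L = LinearMap.id := LinearMap.ext fun y => by
    have := hinv y
    rw [hT y, hT (T 0 + L y), map_add, ← add_assoc, hT0, zero_add] at this
    exact this
  have hdet : LinearMap.det L * LinearMap.det L = 1 := by
    rw [← LinearMap.det_comp, hL, LinearMap.det_id]
  have hdet₀ : LinearMap.det L ≠ 0 := left_ne_zero_of_mul_eq_one hdet
  have hLμ : MeasurePreserving L μ μ := by
    refine ⟨L.continuous_of_finiteDimensional.measurable, ?_⟩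
    have habs : |LinearMap.det L| = 1 := by
      rcases mul_self_eq_one_iff.1 hdet with h | h <;> simp [h]
    rw [Measure.map_linearMap_addHaar_eq_smul_addHaar μ hdet₀, inv_eq_of_mul_eq_one_left hdet,
      habs, ENNReal.ofReal_one, one_smul]
  have : T = (T 0 + ·) ∘ L := funext hT
  rw [this]
  exact (measurePreserving_add_left μ (T 0)).comp hLμ

lemma setIntegral_comp_of_involutive {α : Type*} [MeasurableSpace α] {μ : Measure α} {T : α → α}
    (hT : MeasurePreserving T μ μ) (hinv : Function.Involutive T) {S : Set α}
    (hS : ∀ y, T y ∈ S ↔ y ∈ S) (f : α → ℝ) :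
    ∫ y in S, f (T y) ∂μ = ∫ y in S, f y ∂μ := by
  have hemb : MeasurableEmbedding T :=
    (MeasurableEquiv.mk (hinv.toPerm T) hT.measurable hT.measurable).measurableEmbedding
  rw [← hT.setIntegral_preimage_emb hemb f S]
  congr
  ext y
  exact (hS y).symm

end Integral

section Transfer

variable {ι : Type*} [DecidableEq ι]

def transferMass (b : ι → ℝ) (j k : ι) (δ : ℝ) : ι → ℝ := b + Pi.single k δ - Pi.single j δ

lemma sum_transferMass (s : Finset ι) (b : ι → ℝ) (j k : ι) (δ : ℝ) :
    ∑ i ∈ s, transferMass b j k δ i =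
      ∑ i ∈ s, b i + (if k ∈ s then δ else 0) - (if j ∈ s then δ else 0) := by
  simp only [transferMass, Pi.add_apply, Pi.sub_apply, sum_sub_distrib, sum_add_distrib,
    sum_pi_single']

lemma transferMass_eq_convexCombination {b : ι → ℝ} {j k : ι} (hjk : b k < b j) (δ : ℝ) :
    transferMass b j k δ =
      (1 - δ / (b j - b k)) • b + (δ / (b j - b k)) • (b ∘ Equiv.swap j k) := by
  have hne : b j - b k ≠ 0 := by linarith
  have hkj : k ≠ j := by rintro rfl; exact hjk.false
  ext i
  rcases eq_or_ne i j with rfl | hij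
  · simp [transferMass, hkj.symm]
    field_simp
    ring
  rcases eq_or_ne i k with rfl | hik
  · simp [transferMass, hij]
    field_simp
    ring
  · simp [transferMass, hij, hik, Equiv.swap_apply_of_ne_of_ne hij hik]
    ring

lemma ConcaveOn.le_apply_transferMass {s : Set (ι → ℝ)} {φ : (ι → ℝ) → ℝ}
    (hφ : ConcaveOn ℝ s φ) {b : ι → ℝ} {j k : ι}
    (hswap : b ∘ Equiv.swap j k ∈ s) (hsymm : φ (b ∘ Equiv.swap j k) = φ b) (hb : b ∈ s)
    (hjk : b k < b j) {δ : ℝ} (hδ₀ : 0 ≤ δ) (hδ : δ ≤ b j - b k) :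
    transferMass b j k δ ∈ s ∧ φ b ≤ φ (transferMass b j k δ) := by
  set t := δ / (b j - b k)
  have ht₀ : 0 ≤ t := div_nonneg hδ₀ (by linarith)
  have ht₁ : 0 ≤ 1 - t := sub_nonneg.2 ((div_le_one (by linarith)).2 hδ)
  rw [transferMass_eq_convexCombination hjk]
  refine ⟨hφ.1 hb hswap ht₁ ht₀ (by ring), ?_⟩
  have := hφ.2 hb hswap ht₁ ht₀ (by ring)
  rwa [hsymm, smul_eq_mul, smul_eq_mul, ← add_mul, sub_add_cancel, one_mul] at this

lemma card_ne_transferMass_lt [Fintype ι] {a b : ι → ℝ} {j k : ι} (hj : a j < b j)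
    (hk : b k < a k) (hjk : j ≠ k) :
    #{i | a i ≠ transferMass b j k (min (b j - a j) (a k - b k)) i} < #{i | a i ≠ b i} := by
  set b' := transferMass b j k (min (b j - a j) (a k - b k))
  have hb'j : b' j = b j - min (b j - a j) (a k - b k) := by simp [b', transferMass, hjk.symm]
  have hb'k : b' k = b k + min (b j - a j) (a k - b k) := by simp [b', transferMass, hjk]
  have hb' : ∀ i, i ≠ j → i ≠ k → b' i = b i := fun i hij hik => by
    simp [b', transferMass, hij, hik]
  refine card_lt_card ((ssubset_iff_of_subset fun i => ?_).2 ?_)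
  · simp only [mem_filter, mem_univ, true_and]
    intro hi
    rcases eq_or_ne i j with rfl | hij
    · exact hj.ne
    rcases eq_or_ne i k with rfl | hik
    · exact hk.ne'
    · rwa [← hb' i hij hik]
  · rcases min_choice (b j - a j) (a k - b k) with h | h
    · exact ⟨j, by simpa using hj.ne, by simp [hb'j, h]⟩
    · exact ⟨k, by simpa using hk.ne', by simp [hb'k, h]⟩

end Transfer

section Majorization

variable {ι : Type*} [LinearOrder ι] [LocallyFiniteOrderBot ι] {a b : ι → ℝ}

lemma exists_transfer_indices [Fintype ι] (hmaj : ∀ m, ∑ i ∈ Iic m, a i ≤ ∑ i ∈ Iic m, b i)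
    (hsum : ∑ i, a i = ∑ i, b i) (hab : a ≠ b) :
    ∃ j k, j < k ∧ a j < b j ∧ b k < a k ∧ ∀ i < k, a i ≤ b i := by
  have hex : ∃ i, b i < a i := by
    by_contra! hle
    exact hab (funext fun i => (sum_eq_sum_iff_of_le fun i _ => hle i).1 hsum i (mem_univ i))
  obtain ⟨k, hk, hmin⟩ := (univ.filter fun i => b i < a i).exists_min_image id
    (by obtain ⟨i, hi⟩ := hex; exact ⟨i, by simpa using hi⟩)
  have hle : ∀ i < k, a i ≤ b i := fun i hi => by
    by_contra! h
    exact (hmin i (by simpa using h)).not_gt hi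
  have hIio : ∑ i ∈ Iio k, a i < ∑ i ∈ Iio k, b i := by
    have := hmaj k
    rw [← Iio_insert, sum_insert notMem_Iio_self, sum_insert notMem_Iio_self] at this
    linarith [(mem_filter.1 hk).2]
  obtain ⟨j, hj, hjlt⟩ := exists_lt_of_sum_lt hIio
  exact ⟨j, k, mem_Iio.1 hj, hjlt, (mem_filter.1 hk).2, hle⟩

lemma sum_Iic_le_sum_Iic_transferMass (hmaj : ∀ m, ∑ i ∈ Iic m, a i ≤ ∑ i ∈ Iic m, b i)
    {j k : ι} (hjk : j < k) (hle : ∀ i < k, a i ≤ b i) {δ : ℝ} (hδ : δ ≤ b j - a j) (m : ι) :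
    ∑ i ∈ Iic m, a i ≤ ∑ i ∈ Iic m, transferMass b j k δ i := by
  rw [sum_transferMass]
  simp only [mem_Iic]
  by_cases hkm : k ≤ m
  · simpa [hkm, hjk.le.trans hkm] using hmaj m
  by_cases hjm : j ≤ m
  · -- below `k` every term of `b - a` is nonnegative, and the one at `j` is at least `δ`
    have hslack : b j - a j ≤ ∑ i ∈ Iic m, (b i - a i) :=
      single_le_sum (fun i hi => sub_nonneg.2 (hle i ((mem_Iic.1 hi).trans_lt (not_le.1 hkm))))
        (mem_Iic.2 hjm)
    rw [sum_sub_distrib] at hslack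
    simp only [hkm, hjm, if_false, if_true]
    linarith
  · simpa [hkm, hjm] using hmaj m

theorem ConcaveOn.le_of_sum_Iic_le [Fintype ι] {s : Set (ι → ℝ)} {φ : (ι → ℝ) → ℝ}
    (hφ : ConcaveOn ℝ s φ)
    (hswap : ∀ x ∈ s, ∀ j k, x ∘ Equiv.swap j k ∈ s)
    (hsymm : ∀ x ∈ s, ∀ j k, φ (x ∘ Equiv.swap j k) = φ x)
    (ha : Antitone a) (hb : b ∈ s) (hmaj : ∀ m, ∑ i ∈ Iic m, a i ≤ ∑ i ∈ Iic m, b i)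
    (hsum : ∑ i, a i = ∑ i, b i) : φ b ≤ φ a := by
  induction hN : #{i | a i ≠ b i} using Nat.strong_induction_on generalizing b with
  | _ N ih =>
    by_cases hab : a = b
    · rw [hab]
    obtain ⟨j, k, hjk, hj, hk, hle⟩ := exists_transfer_indices hmaj hsum hab
    set δ := min (b j - a j) (a k - b k)
    have hbjk : b k < b j := by linarith [ha hjk.le]
    have hδ₀ : 0 ≤ δ := le_min (by linarith) (by linarith)
    have hδ : δ ≤ b j - b k := (min_le_left _ _).trans (by linarith [ha hjk.le])
    obtain ⟨hmem, hle'⟩ :=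
      hφ.le_apply_transferMass (hswap b hb j k) (hsymm b hb j k) hb hbjk hδ₀ hδ
    refine hle'.trans (ih _ (hN ▸ card_ne_transferMass_lt hj hk hjk.ne) hmem
      (sum_Iic_le_sum_Iic_transferMass hmaj hjk hle (min_le_left _ _)) ?_ rfl)
    rw [sum_transferMass]
    simp [hsum]

end Majorization

section Simplex

variable {m : ℕ}

def simplexBase (m : ℕ) : Set (Fin m → ℝ) := {y | (∀ i, 0 ≤ y i) ∧ ∑ i, y i ≤ 1}

def toSimplex (y : Fin m → ℝ) : Fin (m + 1) → ℝ := Fin.snoc y (1 - ∑ i, y i)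

lemma simplexIntegral_succ (f : (Fin (m + 1) → ℝ) → ℝ) :
    simplexIntegral (m + 1) f = (m.factorial : ℝ) * ∫ y in simplexBase m, f (toSimplex y) := by
  unfold simplexIntegral toSimplex Fin.snoc
  rfl

lemma sum_toSimplex (y : Fin m → ℝ) : ∑ i, toSimplex y i = 1 := by
  simp [toSimplex, Fin.sum_univ_castSucc]

lemma toSimplex_init {x : Fin (m + 1) → ℝ} (hx : ∑ i, x i = 1) : toSimplex (Fin.init x) = x := by
  rw [Fin.sum_univ_castSucc] at hx
  have hlast : 1 - ∑ i, Fin.init x i = x (Fin.last m) := by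
    simp only [Fin.init]
    linarith
  rw [toSimplex, hlast, Fin.snoc_init_self]

lemma mem_simplexBase_iff {y : Fin m → ℝ} : y ∈ simplexBase m ↔ ∀ i, 0 ≤ toSimplex y i := by
  simp [simplexBase, toSimplex, Fin.forall_fin_succ']

lemma continuous_toSimplex : Continuous (toSimplex (m := m)) :=
  continuous_id.finSnoc (A := fun _ => ℝ)
    (continuous_const.sub (continuous_finsetSum _ fun i _ => continuous_apply i))

lemma isCompact_simplexBase (m : ℕ) : IsCompact (simplexBase m) := by
  have hclosed : IsClosed (simplexBase m) := by
    simp only [simplexBase, Set.ofPred_and, Set.ofPred_forall]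
    exact (isClosed_iInter fun i => isClosed_le continuous_const (continuous_apply i)).inter
      (isClosed_le (by fun_prop) continuous_const)
  refine (isCompact_Icc (a := 0) (b := 1)).of_isClosed_subset hclosed fun y hy =>
    ⟨hy.1, fun i => ?_⟩
  exact (single_le_sum (fun j _ => hy.1 j) (mem_univ i)).trans hy.2

end Simplex

section SimplexSwap

variable {m : ℕ}

def simplexSwap (j k : Fin (m + 1)) (y : Fin m → ℝ) : Fin m → ℝ :=
  Fin.init (toSimplex y ∘ Equiv.swap j k)

lemma toSimplex_simplexSwap (j k : Fin (m + 1)) (y : Fin m → ℝ) :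
    toSimplex (simplexSwap j k y) = toSimplex y ∘ Equiv.swap j k :=
  toSimplex_init ((Equiv.sum_comp (Equiv.swap j k) (toSimplex y)).trans (sum_toSimplex y))

lemma simplexSwap_involutive (j k : Fin (m + 1)) : Function.Involutive (simplexSwap j k) :=
  fun y => by
    have hswap : ⇑(Equiv.swap j k) ∘ ⇑(Equiv.swap j k) = id := funext (Equiv.swap_apply_self j k)
    rw [simplexSwap, toSimplex_simplexSwap, Function.comp_assoc, hswap, Function.comp_id,
      toSimplex, Fin.init_snoc]

lemma simplexSwap_mem_simplexBase_iff (j k : Fin (m + 1)) (y : Fin m → ℝ) :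
    simplexSwap j k y ∈ simplexBase m ↔ y ∈ simplexBase m := by
  simp only [mem_simplexBase_iff, toSimplex_simplexSwap, Function.comp_apply]
  exact (Equiv.swap j k).forall_congr_right (q := fun i => 0 ≤ toSimplex y i)

lemma exists_simplexSwap_eq_add (j k : Fin (m + 1)) :
    ∃ L : (Fin m → ℝ) →ₗ[ℝ] Fin m → ℝ, ∀ y, simplexSwap j k y = simplexSwap j k 0 + L y := by
  let L : (Fin m → ℝ) →ₗ[ℝ] Fin m → ℝ :=
    { toFun := fun y => Fin.init ((Fin.snoc y (-∑ i, y i) : Fin (m + 1) → ℝ) ∘ Equiv.swap j k)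
      map_add' := fun y z => by
        ext i
        simp only [Fin.init, Function.comp_apply, Pi.add_apply]
        refine Fin.lastCases ?_ (fun p => ?_) (Equiv.swap j k i.castSucc)
        · simp [sum_add_distrib]
          ring
        · simp
      map_smul' := fun c y => by
        ext i
        simp only [Fin.init, Function.comp_apply, Pi.smul_apply, smul_eq_mul, RingHom.id_apply]
        refine Fin.lastCases ?_ (fun p => ?_) (Equiv.swap j k i.castSucc)
        · simp [mul_sum]
        · simp }
  refine ⟨L, fun y => ?_⟩
  ext i
  simp only [simplexSwap, L, LinearMap.coe_mk, AddHom.coe_mk, Fin.init, Function.comp_apply,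
    Pi.add_apply, toSimplex]
  refine Fin.lastCases ?_ (fun p => ?_) (Equiv.swap j k i.castSucc)
  · simp
    ring
  · simp

end SimplexSwap

section Subentropy

lemma eta_eq_negMulLog : eta = Real.negMulLog := funext fun _ => (neg_mul _ _).symm

lemma concaveOn_eta_sum_mul {ι : Type*} [Fintype ι] {x : ι → ℝ} (hx : 0 ≤ x) :
    ConcaveOn ℝ (Set.Ici 0) fun lam : ι → ℝ => eta (∑ i, lam i * x i) := by
  have hdot : ∀ lam ∈ Set.Ici (0 : ι → ℝ), 0 ≤ ∑ i, lam i * x i := fun lam hlam =>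
    sum_nonneg fun i _ => mul_nonneg (Set.mem_Ici.1 hlam i) (hx i)
  refine ⟨convex_Ici 0, fun u hu v hv p q hp hq hpq => ?_⟩
  have := Real.concaveOn_negMulLog.2 (hdot u hu) (hdot v hv) hp hq hpq
  simpa [eta_eq_negMulLog, add_mul, sum_add_distrib, mul_sum, mul_assoc] using this

lemma concaveOn_subF (n : ℕ) : ConcaveOn ℝ (Set.Ici 0) (subF n) := by
  cases n with
  | zero =>
    have hconst : subF 0 = fun _ => -harmC 0 := by
      funext lam
      simp [subF]
    rw [hconst]
    exact concaveOn_const _ (convex_Ici 0)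
  | succ m =>
    have hint : ConcaveOn ℝ (Set.Ici 0) fun lam : Fin (m + 1) → ℝ =>
        ∫ y in simplexBase m, eta (∑ i, lam i * toSimplex y i) := by
      refine concaveOn_integral (convex_Ici 0) (fun lam _ => ?_) ?_
      · refine (Continuous.continuousOn ?_).integrableOn_compact (isCompact_simplexBase m)
        rw [eta_eq_negMulLog]
        exact Real.continuous_negMulLog.comp (continuous_finsetSum _ fun i _ =>
          continuous_const.mul ((continuous_apply i).comp continuous_toSimplex))
      · filter_upwards [ae_restrict_mem (isCompact_simplexBase m).measurableSet] with y hy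
        exact concaveOn_eta_sum_mul (mem_simplexBase_iff.1 hy)
    have hsubF : subF (m + 1) = fun lam => ((m + 1 : ℕ) * m.factorial : ℝ) •
        (∫ y in simplexBase m, eta (∑ i, lam i * toSimplex y i)) + -harmC (m + 1) := by
      funext lam
      simp only [subF, simplexIntegral_succ, smul_eq_mul]
      ring
    rw [hsubF]
    exact (hint.smul (by positivity)).add_const _

lemma subF_comp_swap (n : ℕ) (lam : Fin n → ℝ) (j k : Fin n) :
    subF n (lam ∘ Equiv.swap j k) = subF n lam := by
  cases n with
  | zero => exact congrArg _ (Subsingleton.elim _ _)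
  | succ m =>
    obtain ⟨L, hL⟩ := exists_simplexSwap_eq_add j k
    have hpres := measurePreserving_of_involutive_of_affine volume L hL
      (simplexSwap_involutive j k)
    have hint : ∫ y in simplexBase m, eta (∑ i, (lam ∘ Equiv.swap j k) i * toSimplex y i) =
        ∫ y in simplexBase m, eta (∑ i, lam i * toSimplex y i) := by
      rw [← setIntegral_comp_of_involutive hpres (simplexSwap_involutive j k)
        (simplexSwap_mem_simplexBase_iff j k)]
      congr with y
      rw [toSimplex_simplexSwap]
      congr 1
      exact Equiv.sum_comp (Equiv.swap j k) fun i => lam i * toSimplex y i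
    simp only [subF, simplexIntegral_succ, hint]

lemma subF_comp_perm (n : ℕ) (π : Equiv.Perm (Fin n)) (lam : Fin n → ℝ) :
    subF n (lam ∘ π) = subF n lam := by
  induction π using Equiv.Perm.swap_induction_on generalizing lam with
  | one => rfl
  | swap_mul π j k _ ih =>
    rw [Equiv.Perm.coe_mul, ← Function.comp_assoc, ih, subF_comp_swap]

lemma subF_comp_finEquiv {m n : ℕ} (e : Fin m ≃ Fin n) (lam : Fin n → ℝ) :
    subF m (lam ∘ e) = subF n lam := by
  obtain rfl : m = n := by simpa using Fintype.card_congr e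
  exact subF_comp_perm m e lam

end Subentropy

section DensityMatrix

variable {n : ℕ} {τ : Matrix (Fin n) (Fin n) ℂ} {v : Fin n → ℝ} {e : Equiv.Perm (Fin n)}

lemma Qmat_eq_subF (hτ : τ.IsHermitian) (hv : v = hτ.eigenvalues ∘ e) : Qmat τ = subF n v := by
  rw [Qmat, dif_pos hτ, ← subF_comp_finEquiv ((Fintype.equivFin (Fin n)).symm.trans e.symm), hv]
  congr 1
  ext
  simp

lemma sum_eq_trace_of_eq_eigenvalues_comp (hτ : τ.IsHermitian) (hv : v = hτ.eigenvalues ∘ e) :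
    ((∑ i, v i : ℝ) : ℂ) = τ.trace := by
  rw [hτ.trace_eq_sum_eigenvalues, hv]
  push_cast
  exact Equiv.sum_comp e fun i => (hτ.eigenvalues i : ℂ)

end DensityMatrix

theorem subentropy_schur_concave_general (n : ℕ) (ρ σ : Matrix (Fin n) (Fin n) ℂ)
    (hρ : ρ.PosSemidef) (hρt : ρ.trace = 1) (hσ : σ.PosSemidef) (hσt : σ.trace = 1)
    (a b : Fin n → ℝ)
    (ha : ∃ e : Equiv.Perm (Fin n), a = hρ.isHermitian.eigenvalues ∘ e)
    (hb : ∃ e : Equiv.Perm (Fin n), b = hσ.isHermitian.eigenvalues ∘ e)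
    (haa : Antitone a)
    (hmaj : ∀ k : Fin n, ∑ i ∈ Finset.Iic k, a i ≤ ∑ i ∈ Finset.Iic k, b i) :
    Qmat ρ ≥ Qmat σ := by
  obtain ⟨e, he⟩ := ha
  obtain ⟨f, hf⟩ := hb
  have hsum : ∑ i, a i = ∑ i, b i := by
    have hρsum := (sum_eq_trace_of_eq_eigenvalues_comp hρ.isHermitian he).trans hρt
    have hσsum := (sum_eq_trace_of_eq_eigenvalues_comp hσ.isHermitian hf).trans hσt
    exact_mod_cast hρsum.trans hσsum.symm
  have hb₀ : b ∈ Set.Ici 0 := fun i => hf ▸ hσ.eigenvalues_nonneg (f i)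
  rw [ge_iff_le, Qmat_eq_subF hρ.isHermitian he, Qmat_eq_subF hσ.isHermitian hf]
  exact (concaveOn_subF n).le_of_sum_Iic_le (fun x hx j k i => hx (Equiv.swap j k i))
    (fun x _ j k => subF_comp_swap n x j k) haa hb₀ hmaj hsum

/-- subentropy is Schur concave in the density matrix: if the
eigenvalue vectors listed in non-increasing order satisfy λ(ρ) ≺ λ(σ), then Q(ρ) ≥ Q(σ). -/
theorem subentropy_schur_concave (n : ℕ) (ρ σ : Matrix (Fin n) (Fin n) ℂ)
    (hρ : ρ.PosSemidef) (hρt : ρ.trace = 1) (hσ : σ.PosSemidef) (hσt : σ.trace = 1)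
    (a b : Fin n → ℝ)
    (ha : ∃ e : Equiv.Perm (Fin n), a = hρ.isHermitian.eigenvalues ∘ e)
    (hb : ∃ e : Equiv.Perm (Fin n), b = hσ.isHermitian.eigenvalues ∘ e)
    (haa : Antitone a) (hba : Antitone b)
    (hmaj : ∀ k : Fin n, ∑ i ∈ Finset.Iic k, a i ≤ ∑ i ∈ Finset.Iic k, b i) :
    Qmat ρ ≥ Qmat σ :=
  subentropy_schur_concave_general n ρ σ hρ hρt hσ hσt a b ha hb haa hmaj
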